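/- The Hamiltonian vector field of H1 for the map (P.vi) gives the modified Volterra lattice on the middle coordinates: {w1, H1} = (w1^2 − δ^2)*(w2 − w0) and {w2, H1} = (w2^2 − δ^2)*(w3 − w1). -/
import Mathlib


noncomputable def D0 (F : ℝ → ℝ → ℝ → ℝ → ℝ) (w0 w1 w2 w3 : ℝ) : ℝ :=
  deriv (fun t => F t w1 w2 w3) w0
noncomputable def D1 (F : ℝ → ℝ → ℝ → ℝ → ℝ) (w0 w1 w2 w3 : ℝ) : ℝ :=
  deriv (fun t => F w0 t w2 w3) w1
noncomputable def D2 (F : ℝ → ℝ → ℝ → ℝ → ℝ) (w0 w1 w2 w3 : ℝ) : ℝ :=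
  deriv (fun t => F w0 w1 t w3) w2
noncomputable def D3 (F : ℝ → ℝ → ℝ → ℝ → ℝ) (w0 w1 w2 w3 : ℝ) : ℝ :=
  deriv (fun t => F w0 w1 w2 t) w3

noncomputable def pbVi (nu d : ℝ) (F G : ℝ → ℝ → ℝ → ℝ → ℝ) (w0 w1 w2 w3 : ℝ) : ℝ :=
  (1 / (w1^2 - d^2)) * (D0 F w0 w1 w2 w3 * D2 G w0 w1 w2 w3 - D2 F w0 w1 w2 w3 * D0 G w0 w1 w2 w3)
  + (1 / (w2^2 - d^2)) * (D1 F w0 w1 w2 w3 * D3 G w0 w1 w2 w3 - D3 F w0 w1 w2 w3 * D1 G w0 w1 w2 w3)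
  + (-(2*(w0*w1 + w1*w2 + w2*w3) + nu) / ((w1^2 - d^2) * (w2^2 - d^2))) * (D0 F w0 w1 w2 w3 * D3 G w0 w1 w2 w3 - D3 F w0 w1 w2 w3 * D0 G w0 w1 w2 w3)

noncomputable def H1vi (a c nu d w0 w1 w2 w3 : ℝ) : ℝ :=
  (w1^2*w2^2 - d^2*(w1^2+w2^2))*(w3*w2 + w0*w1 + w1*w2 - w3*w0 + nu) + d^4*(w3*w2 + w0*w1 - w0*w3) + c*w2*w1 + a*(w2+w1)

lemma deriv_linear (k b x : ℝ) : deriv (fun t : ℝ => k * t + b) x = k := by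
  have : HasDerivAt (fun t : ℝ => k * t + b) k x := by
    simpa using ((hasDerivAt_id x).const_mul k).add_const b
  exact this.deriv

lemma dH0 (a c nu d w0 w1 w2 w3 : ℝ) :
    D0 (H1vi a c nu d) w0 w1 w2 w3 = (w1^2 - d^2)*(w2^2 - d^2)*(w1 - w3) := by
  unfold D0
  have : (fun t => H1vi a c nu d t w1 w2 w3)
      = fun t => ((w1^2 - d^2)*(w2^2 - d^2)*(w1 - w3)) * t +
        ((w1^2*w2^2 - d^2*(w1^2+w2^2))*(w3*w2 + w1*w2 + nu) + d^4*(w3*w2) + c*w2*w1 + a*(w2+w1)) := by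
    funext t; unfold H1vi; ring
  rw [this, deriv_linear]

lemma dH3 (a c nu d w0 w1 w2 w3 : ℝ) :
    D3 (H1vi a c nu d) w0 w1 w2 w3 = (w1^2 - d^2)*(w2^2 - d^2)*(w2 - w0) := by
  unfold D3
  have : (fun t => H1vi a c nu d w0 w1 w2 t)
      = fun t => ((w1^2 - d^2)*(w2^2 - d^2)*(w2 - w0)) * t +
        ((w1^2*w2^2 - d^2*(w1^2+w2^2))*(w0*w1 + w1*w2 + nu) + d^4*(w0*w1) + c*w2*w1 + a*(w2+w1)) := by
    funext t; unfold H1vi; ring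
  rw [this, deriv_linear]

theorem stmt13 (a c nu d w0 w1 w2 w3 : ℝ)
    (h : (w1^2 - d^2) * (w2^2 - d^2) ≠ 0) :
    pbVi nu d (fun _ x _ _ => x) (H1vi a c nu d) w0 w1 w2 w3 = (w1^2 - d^2) * (w2 - w0) ∧
    pbVi nu d (fun _ _ x _ => x) (H1vi a c nu d) w0 w1 w2 w3 = (w2^2 - d^2) * (w3 - w1) := by
  have h1 : (w1^2 - d^2) ≠ 0 := left_ne_zero_of_mul h
  have h2 : (w2^2 - d^2) ≠ 0 := right_ne_zero_of_mul h
  constructor <;>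
  · unfold pbVi
    rw [dH0, dH3]
    simp only [D0, D1, D2, D3, deriv_const, deriv_id'']
    field_simp
    ring
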